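/- Assume cos(2nα)·(cos(2α) + sin(2α)) ≥ 1 (the small-α regime). Set q := sin(2nα)²/(2·(1 − c̃·c̃ₙ)). Then for each k ∈ {0,1}: (⟨0|⊗ₖI₂)·(M′⊗ₖI₂)·C_X·(ψₖ⊗ₖI₂) = √q · Uₖ, and (⟨1|⊗ₖI₂)·(M′⊗ₖI₂)·C_X·(ψₖ⊗ₖI₂) = 0. (Proposition 3 of the paper, small-α branch: the circuit with projective success outcome 0 retrieves each unitary perfectly with the optimal probability q.) -/

import Mathlib

/-!
Taking the input qubit as control, the circuit sends `ψₖ ⊗ |b⟩` to `σxᵇ ψₖ ⊗ |b⟩`, and `σx` swaps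
`ψ₀` and `ψ₁`. So the block of outcome `j` is diagonal, with entries `⟨j|M′ψₖ⟩` and `⟨j|M′ψ₁₋ₖ⟩`.
The middle row of `M′` vanishes, so outcome `1` never occurs. Since `⟨+|ψₖ⟩ = cos nα` and
`⟨−|ψₖ⟩ = ±i sin nα`, the amplitude of outcome `0` is `√a cos nα ± i √b sin nα`. The half-angle
formulas give `a cos² nα = q cos² α` and `b sin² nα = q sin² α`, and for `0 < α ≤ nα < π/4` all
these sines and cosines are nonnegative, so the amplitude is `√q e^{±iα}`.
-/

open Matrix Kronecker Complex Filter
open scoped ComplexOrder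

noncomputable section

/-- Pauli `σx`. -/
def pX : Matrix (Fin 2) (Fin 2) ℂ := !![0, 1; 1, 0]

/-- Pauli `σz`. -/
def pZ : Matrix (Fin 2) (Fin 2) ℂ := !![1, 0; 0, -1]

/-- `|+⟩ = (1,1)/√2`. -/
def plusV : Fin 2 → ℂ := ((Real.sqrt 2 : ℂ))⁻¹ • ![1, 1]

/-- `|−⟩ = (1,−1)/√2`. -/
def minusV : Fin 2 → ℂ := ((Real.sqrt 2 : ℂ))⁻¹ • ![1, -1]

/-- The memory states `ψ₀ = (e^{inα}, e^{-inα})/√2`, `ψ₁ = (e^{-inα}, e^{inα})/√2`. -/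
def psiMem (n : ℕ) (α : ℝ) (k : Fin 2) : Fin 2 → ℂ :=
  if k = 0 then
    ((Real.sqrt 2 : ℂ))⁻¹ • ![Complex.exp (Complex.I * n * α), Complex.exp (-(Complex.I * n * α))]
  else
    ((Real.sqrt 2 : ℂ))⁻¹ • ![Complex.exp (-(Complex.I * n * α)), Complex.exp (Complex.I * n * α)]

/-- The two unitaries `U₀ = diag(e^{iα}, e^{-iα})`, `U₁ = diag(e^{-iα}, e^{iα})`. -/
def Umat (α : ℝ) (k : Fin 2) : Matrix (Fin 2) (Fin 2) ℂ :=
  if k = 0 then !![Complex.exp (Complex.I * α), 0; 0, Complex.exp (-(Complex.I * α))]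
  else !![Complex.exp (-(Complex.I * α)), 0; 0, Complex.exp (Complex.I * α)]

/-- CNOT with second factor as control and first factor as target. -/
def CX : Matrix (Fin 2 × Fin 2) (Fin 2 × Fin 2) ℂ :=
  (1 : Matrix (Fin 2) (Fin 2) ℂ) ⊗ₖ !![(1 : ℂ), 0; 0, 0] + pX ⊗ₖ !![(0 : ℂ), 0; 0, 1]

/-- `ψ ⊗ₖ I₂` : the 4×2 matrix tensoring a column vector with the identity. -/
def ketI (ψ : Fin 2 → ℂ) : Matrix (Fin 2 × Fin 2) (Fin 2) ℂ :=
  Matrix.of fun p b => ψ p.1 * (if p.2 = b then 1 else 0)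

/-- `⟨j| ⊗ₖ I₂` : the 2×6 matrix contracting the qutrit factor with `|j⟩`. -/
def braI (j : Fin 3) : Matrix (Fin 2) (Fin 3 × Fin 2) ℂ :=
  Matrix.of fun b p => if p.1 = j ∧ p.2 = b then 1 else 0

/-- `a = (1 + c̃)(1 − c̃ₙ)/(2(1 − c̃·c̃ₙ))`. -/
def aCoef (n : ℕ) (α : ℝ) : ℝ :=
  (1 + Real.cos (2 * α)) * (1 - Real.cos (2 * n * α)) /
    (2 * (1 - Real.cos (2 * α) * Real.cos (2 * n * α)))

/-- `b = (1 − c̃)(1 + c̃ₙ)/(2(1 − c̃·c̃ₙ))`. -/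
def bCoef (n : ℕ) (α : ℝ) : ℝ :=
  (1 - Real.cos (2 * α)) * (1 + Real.cos (2 * n * α)) /
    (2 * (1 - Real.cos (2 * α) * Real.cos (2 * n * α)))

/-- `a₁′ = (√a, 0, √b)`. -/
def aOne' (n : ℕ) (α : ℝ) : Fin 3 → ℂ :=
  ![((Real.sqrt (aCoef n α) : ℝ) : ℂ), 0, ((Real.sqrt (bCoef n α) : ℝ) : ℂ)]

/-- `a₂′ = (√b, 0, −√a)`. -/
def aTwo' (n : ℕ) (α : ℝ) : Fin 3 → ℂ :=
  ![((Real.sqrt (bCoef n α) : ℝ) : ℂ), 0, ((-Real.sqrt (aCoef n α) : ℝ) : ℂ)]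

/-- The qubit-to-qutrit isometry `M′` with `M′|+⟩ = a₁′`, `M′|−⟩ = a₂′`. -/
def Mmat' (n : ℕ) (α : ℝ) : Matrix (Fin 3) (Fin 2) ℂ :=
  Matrix.vecMulVec (aOne' n α) (star plusV) + Matrix.vecMulVec (aTwo' n α) (star minusV)

lemma sqrt_mul_eq_sqrt_mul_of_mul_sq_eq {x y u v : ℝ} (hu : 0 ≤ u) (hv : 0 ≤ v)
    (h : x * u ^ 2 = y * v ^ 2) : √x * u = √y * v := by
  rw [← Real.sqrt_sq hu, ← Real.sqrt_sq hv, ← Real.sqrt_mul' x (sq_nonneg u),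
    ← Real.sqrt_mul' y (sq_nonneg v), h]

/-- The success probability `q` of the paper. -/
def succProb (n : ℕ) (α : ℝ) : ℝ :=
  Real.sin (2 * n * α) ^ 2 / (2 * (1 - Real.cos (2 * α) * Real.cos (2 * n * α)))

lemma aCoef_mul_cos_sq (n : ℕ) (α : ℝ) :
    aCoef n α * Real.cos (n * α) ^ 2 = succProb n α * Real.cos α ^ 2 := by
  rw [aCoef, succProb, Real.cos_sq (n * α), Real.cos_sq α, ← mul_assoc, Real.sin_sq]
  ring

lemma bCoef_mul_sin_sq (n : ℕ) (α : ℝ) :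
    bCoef n α * Real.sin (n * α) ^ 2 = succProb n α * Real.sin α ^ 2 := by
  rw [bCoef, succProb, Real.sin_sq_eq_half_sub (n * α), Real.sin_sq_eq_half_sub α,
    ← mul_assoc, Real.sin_sq]
  ring

section FirstQuadrant

variable {n : ℕ} {α : ℝ}

lemma sqrt_aCoef_mul_cos (hn : 1 ≤ n) (hα : 0 ≤ α) (hnα : n * α ≤ Real.pi / 2) :
    √(aCoef n α) * Real.cos (n * α) = √(succProb n α) * Real.cos α := by
  have hα' : α ≤ n * α := le_mul_of_one_le_left hα (by exact_mod_cast hn)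
  refine sqrt_mul_eq_sqrt_mul_of_mul_sq_eq ?_ ?_ (aCoef_mul_cos_sq n α) <;>
    apply Real.cos_nonneg_of_mem_Icc <;> constructor <;> linarith [Real.pi_pos]

lemma sqrt_bCoef_mul_sin (hn : 1 ≤ n) (hα : 0 ≤ α) (hnα : n * α ≤ Real.pi / 2) :
    √(bCoef n α) * Real.sin (n * α) = √(succProb n α) * Real.sin α := by
  have hα' : α ≤ n * α := le_mul_of_one_le_left hα (by exact_mod_cast hn)
  refine sqrt_mul_eq_sqrt_mul_of_mul_sq_eq ?_ ?_ (bCoef_mul_sin_sq n α) <;>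
    apply Real.sin_nonneg_of_nonneg_of_le_pi <;> linarith [Real.pi_pos]

end FirstQuadrant

lemma braI_mul_kronecker_mul_CX_mul_ketI (j : Fin 3) (M : Matrix (Fin 3) (Fin 2) ℂ)
    (ψ : Fin 2 → ℂ) :
    braI j * (M ⊗ₖ (1 : Matrix (Fin 2) (Fin 2) ℂ)) * CX * ketI ψ
      = diagonal ![(M *ᵥ ψ) j, (M *ᵥ (pX *ᵥ ψ)) j] := by
  ext b b'
  fin_cases j <;> fin_cases b <;> fin_cases b' <;>
    simp [Matrix.mul_apply, Fintype.sum_prod_type, Fin.sum_univ_succ, braI, CX, pX, ketI,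
      Matrix.mulVec, dotProduct, Matrix.one_apply] <;> ring

lemma ofReal_sqrt_two_inv_mul_self : ((√2 : ℝ) : ℂ)⁻¹ * ((√2 : ℝ) : ℂ)⁻¹ = 2⁻¹ := by
  rw [← mul_inv, ← ofReal_mul, Real.mul_self_sqrt zero_le_two, ofReal_ofNat]

section Overlaps

variable (n : ℕ) (α : ℝ)

lemma star_plusV_dotProduct_psiMem (k : Fin 2) :
    star plusV ⬝ᵥ psiMem n α k = Real.cos (n * α) := by
  rw [ofReal_cos, Complex.cos, neg_mul,
    show ((n * α : ℝ) : ℂ) * I = I * n * α by push_cast; ring]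
  fin_cases k <;> simp [plusV, psiMem, dotProduct, Fin.sum_univ_two] <;>
    linear_combination (exp (I * n * α) + exp (-(I * n * α))) * ofReal_sqrt_two_inv_mul_self

lemma star_minusV_dotProduct_psiMem_zero :
    star minusV ⬝ᵥ psiMem n α 0 = Real.sin (n * α) * I := by
  rw [ofReal_sin, Complex.sin, neg_mul,
    show ((n * α : ℝ) : ℂ) * I = I * n * α by push_cast; ring]
  simp [minusV, psiMem, dotProduct, Fin.sum_univ_two]
  linear_combination (exp (I * n * α) - exp (-(I * n * α))) *
    (ofReal_sqrt_two_inv_mul_self + I_sq / 2)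

lemma star_minusV_dotProduct_psiMem_one :
    star minusV ⬝ᵥ psiMem n α 1 = -(Real.sin (n * α) * I) := by
  rw [ofReal_sin, Complex.sin, neg_mul,
    show ((n * α : ℝ) : ℂ) * I = I * n * α by push_cast; ring]
  simp [minusV, psiMem, dotProduct, Fin.sum_univ_two]
  linear_combination (exp (-(I * n * α)) - exp (I * n * α)) *
    (ofReal_sqrt_two_inv_mul_self + I_sq / 2)

lemma pX_mulVec_psiMem_zero : pX *ᵥ psiMem n α 0 = psiMem n α 1 := by
  ext i; fin_cases i <;> simp [pX, psiMem, Matrix.mulVec, dotProduct]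

lemma pX_mulVec_psiMem_one : pX *ᵥ psiMem n α 1 = psiMem n α 0 := by
  ext i; fin_cases i <;> simp [pX, psiMem, Matrix.mulVec, dotProduct]

end Overlaps

section Isometry

variable (n : ℕ) (α : ℝ) (v : Fin 2 → ℂ)

lemma Mmat'_mulVec :
    Mmat' n α *ᵥ v = (star plusV ⬝ᵥ v) • aOne' n α + (star minusV ⬝ᵥ v) • aTwo' n α := by
  rw [Mmat', add_mulVec, vecMulVec_mulVec, vecMulVec_mulVec, op_smul_eq_smul, op_smul_eq_smul]

lemma Mmat'_mulVec_apply_zero :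
    (Mmat' n α *ᵥ v) 0 = (star plusV ⬝ᵥ v) * √(aCoef n α) + (star minusV ⬝ᵥ v) * √(bCoef n α) := by
  simp [Mmat'_mulVec, aOne', aTwo']

lemma Mmat'_mulVec_apply_one : (Mmat' n α *ᵥ v) 1 = 0 := by
  simp [Mmat'_mulVec, aOne', aTwo']

end Isometry

section Retrieval

variable {n : ℕ} {α : ℝ}

lemma Mmat'_mulVec_psiMem_zero_apply_zero (hn : 1 ≤ n) (hα : 0 ≤ α)
    (hnα : n * α ≤ Real.pi / 2) :
    (Mmat' n α *ᵥ psiMem n α 0) 0 = √(succProb n α) * exp (I * α) := by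
  have ha := congrArg ofReal (sqrt_aCoef_mul_cos hn hα hnα)
  have hb := congrArg ofReal (sqrt_bCoef_mul_sin hn hα hnα)
  simp only [ofReal_mul] at ha hb
  rw [Mmat'_mulVec_apply_zero, star_plusV_dotProduct_psiMem, star_minusV_dotProduct_psiMem_zero,
    mul_comm I, exp_mul_I, ← ofReal_cos, ← ofReal_sin]
  linear_combination ha + I * hb

lemma Mmat'_mulVec_psiMem_one_apply_zero (hn : 1 ≤ n) (hα : 0 ≤ α)
    (hnα : n * α ≤ Real.pi / 2) :
    (Mmat' n α *ᵥ psiMem n α 1) 0 = √(succProb n α) * exp (-(I * α)) := by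
  have ha := congrArg ofReal (sqrt_aCoef_mul_cos hn hα hnα)
  have hb := congrArg ofReal (sqrt_bCoef_mul_sin hn hα hnα)
  simp only [ofReal_mul] at ha hb
  rw [Mmat'_mulVec_apply_zero, star_plusV_dotProduct_psiMem, star_minusV_dotProduct_psiMem_one,
    show -(I * α) = (-α : ℂ) * I by ring, exp_mul_I, cos_neg, sin_neg, ← ofReal_cos, ← ofReal_sin]
  linear_combination ha - I * hb

end Retrieval

theorem circuit_retrieves_unitaries_small_alpha_general (n : ℕ) (hn : 1 ≤ n) (α : ℝ) (hα : 0 < α)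
    (hdist : 4 * n * α < Real.pi) (k : Fin 2) :
    braI 0 * ((Mmat' n α) ⊗ₖ (1 : Matrix (Fin 2) (Fin 2) ℂ)) * CX * ketI (psiMem n α k)
      = ((Real.sqrt (Real.sin (2 * n * α) ^ 2 /
          (2 * (1 - Real.cos (2 * α) * Real.cos (2 * n * α)))) : ℝ) : ℂ) • Umat α k ∧
    braI 1 * ((Mmat' n α) ⊗ₖ (1 : Matrix (Fin 2) (Fin 2) ℂ)) * CX * ketI (psiMem n α k)
      = 0 := by
  have hnα : n * α ≤ Real.pi / 2 := by
    linarith [Real.pi_pos, show (4 : ℝ) * n * α = 4 * (n * α) by ring]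
  have h₀ := Mmat'_mulVec_psiMem_zero_apply_zero hn hα.le hnα
  have h₁ := Mmat'_mulVec_psiMem_one_apply_zero hn hα.le hnα
  simp only [braI_mul_kronecker_mul_CX_mul_ketI, Mmat'_mulVec_apply_one]
  refine ⟨?_, by simp⟩
  obtain rfl | rfl : k = 0 ∨ k = 1 := by fin_cases k <;> simp
  · rw [pX_mulVec_psiMem_zero, h₀, h₁]
    ext i j; fin_cases i <;> fin_cases j <;> simp [Umat, succProb]
  · rw [pX_mulVec_psiMem_one, h₀, h₁]
    ext i j; fin_cases i <;> fin_cases j <;> simp [Umat, succProb]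

theorem circuit_retrieves_unitaries_small_alpha (n : ℕ) (hn : 1 ≤ n) (α : ℝ) (hα : 0 < α)
    (hdist : 4 * n * α < Real.pi)
    (hreg : 1 ≤ Real.cos (2 * n * α) * (Real.cos (2 * α) + Real.sin (2 * α))) (k : Fin 2) :
    braI 0 * ((Mmat' n α) ⊗ₖ (1 : Matrix (Fin 2) (Fin 2) ℂ)) * CX * ketI (psiMem n α k)
      = ((Real.sqrt (Real.sin (2 * n * α) ^ 2 /
          (2 * (1 - Real.cos (2 * α) * Real.cos (2 * n * α)))) : ℝ) : ℂ) • Umat α k ∧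
    braI 1 * ((Mmat' n α) ⊗ₖ (1 : Matrix (Fin 2) (Fin 2) ℂ)) * CX * ketI (psiMem n α k)
      = 0 :=
  circuit_retrieves_unitaries_small_alpha_general n hn α hα hdist k
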